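/- arXiv:1909.08099 — 2 statements merged into one kernel-verified Lean document; each statement's English description precedes it below -/
import Mathlib

section
/- If a sequence x_k converges to x̄, d_k is a minimizer of the problem min_{‖d‖≤1} max_{i∈{1,…,m}} ∇f_i(x_k)ᵀd for each k, and d_k converges to d̄, then d̄ is a minimizer of min_{‖d‖≤1} max_{i∈{1,…,m}} ∇f_i(x̄)ᵀd. -/
/-! The objective `(x, d) ↦ maxᵢ ⟪∇fᵢ(x), d⟫` is jointly continuous because the gradients are,
and the constraint set, the closed unit ball, is closed and does not depend on `x`. Passing to the
limit in `φ(xₖ, dₖ) ≤ φ(xₖ, d')` therefore gives `φ(x̄, d̄) ≤ φ(x̄, d')`. -/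

open scoped RealInnerProductSpace

/-- `d` is a minimizer of `max_i ⟪∇f_i(x), d⟫` over the closed unit ball. -/
def IsMinimizer {n m : ℕ} [NeZero m] (f : Fin m → EuclideanSpace ℝ (Fin n) → ℝ)
    (x d : EuclideanSpace ℝ (Fin n)) : Prop :=
  ‖d‖ ≤ 1 ∧ ∀ d' : EuclideanSpace ℝ (Fin n), ‖d'‖ ≤ 1 →
    Finset.univ.sup' Finset.univ_nonempty (fun i => ⟪gradient (f i) x, d⟫) ≤
      Finset.univ.sup' Finset.univ_nonempty (fun i => ⟪gradient (f i) x, d'⟫)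

open Filter Topology

theorem ContDiff.continuous_gradient {F : Type*} [NormedAddCommGroup F] [InnerProductSpace ℝ F]
    [CompleteSpace F] {g : F → ℝ} (hg : ContDiff ℝ 1 g) : Continuous (gradient g) :=
  (InnerProductSpace.toDual ℝ F).symm.continuous.comp (hg.continuous_fderiv one_ne_zero)

theorem isMinOn_of_tendsto {α X D : Type*} [TopologicalSpace X] [TopologicalSpace D]
    {l : Filter α} [l.NeBot] {φ : X → D → ℝ} (hφ : Continuous (Function.uncurry φ))
    {S : Set D} (hS : IsClosed S) {x : α → X} {d : α → D} {x₀ : X} {d₀ : D}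
    (hx : Tendsto x l (𝓝 x₀)) (hd : Tendsto d l (𝓝 d₀))
    (hmem : ∀ᶠ k in l, d k ∈ S) (hmin : ∀ᶠ k in l, IsMinOn (φ (x k)) S (d k)) :
    d₀ ∈ S ∧ IsMinOn (φ x₀) S d₀ := by
  refine ⟨hS.mem_of_tendsto hd hmem, fun d' hd' => ?_⟩
  have hlim : ∀ {e : α → D} {e₀ : D}, Tendsto e l (𝓝 e₀) →
      Tendsto (fun k => φ (x k) (e k)) l (𝓝 (φ x₀ e₀)) := fun he =>
    (hφ.tendsto (x₀, _)).comp (hx.prodMk_nhds he)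
  exact le_of_tendsto_of_tendsto (hlim hd) (hlim tendsto_const_nhds) <|
    hmin.mono fun k hk => hk hd'

noncomputable def maxDirDeriv {n m : ℕ} [NeZero m] (f : Fin m → EuclideanSpace ℝ (Fin n) → ℝ)
    (x d : EuclideanSpace ℝ (Fin n)) : ℝ :=
  Finset.univ.sup' Finset.univ_nonempty fun i => ⟪gradient (f i) x, d⟫

lemma isMinimizer_iff {n m : ℕ} [NeZero m] {f : Fin m → EuclideanSpace ℝ (Fin n) → ℝ}
    {x d : EuclideanSpace ℝ (Fin n)} :
    IsMinimizer f x d ↔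
      d ∈ Metric.closedBall 0 1 ∧ IsMinOn (maxDirDeriv f x) (Metric.closedBall 0 1) d := by
  simp only [IsMinimizer, maxDirDeriv, mem_closedBall_zero_iff, isMinOn_iff]

lemma continuous_maxDirDeriv {n m : ℕ} [NeZero m] {f : Fin m → EuclideanSpace ℝ (Fin n) → ℝ}
    (hf : ∀ i, ContDiff ℝ 1 (f i)) : Continuous (Function.uncurry (maxDirDeriv f)) :=
  Continuous.finset_sup'_apply Finset.univ_nonempty fun i _ =>
    ((hf i).continuous_gradient.comp continuous_fst).inner continuous_snd

theorem stmt5 {n m : ℕ} [NeZero m] (f : Fin m → EuclideanSpace ℝ (Fin n) → ℝ)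
    (hf : ∀ i, ContDiff ℝ 1 (f i))
    (x : ℕ → EuclideanSpace ℝ (Fin n)) (d : ℕ → EuclideanSpace ℝ (Fin n))
    (xbar dbar : EuclideanSpace ℝ (Fin n))
    (hx : Filter.Tendsto x Filter.atTop (nhds xbar))
    (hd : Filter.Tendsto d Filter.atTop (nhds dbar))
    (hmin : ∀ k, IsMinimizer f (x k) (d k)) :
    IsMinimizer f xbar dbar :=
  isMinimizer_iff.2 <| isMinOn_of_tendsto (continuous_maxDirDeriv hf) Metric.isClosed_closedBall
    hx hd (.of_forall fun k => (isMinimizer_iff.1 (hmin k)).1)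
    (.of_forall fun k => (isMinimizer_iff.1 (hmin k)).2)
end

section
/- Suppose at a point x_k and stepsize α_k > 0, for every direction d in a finite set D_k of vectors with ‖d‖ ≤ 1 there exists an index i(d) ∈ {1,…,m} with f_{i(d)}(x_k + α_k d) ≥ f_{i(d)}(x_k) − (c/2)α_k². Then μ_{D_k}(x_k) := −min_{d∈D_k} max_{i∈{1,…,m}} ∇f_i(x_k)ᵀd satisfies μ_{D_k}(x_k) ≤ (1/2)(L_max + c)·α_k. -/
/-!
Take a direction `d ∈ D` attaining the minimum and an index `i` for which the step `α d` fails
to decrease `f i` sufficiently. The descent lemma for the `L i`-smooth `f i` gives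
`-c/2 α² ≤ f i (x + α d) - f i x ≤ α ⟪∇f i x, d⟫ + L i / 2 α²`, and dividing by `α` bounds
`-⟪∇f i x, d⟫`, hence `μ_D(x)`, by `(L i + c) α / 2 ≤ (L_max + c) α / 2`.
-/

open scoped RealInnerProductSpace NNReal

section DescentLemma

variable {E : Type*} [NormedAddCommGroup E] [InnerProductSpace ℝ E] [CompleteSpace E]

lemma hasDerivAt_apply_add_smul {f : E → ℝ} (hf : Differentiable ℝ f) (x v : E) (t : ℝ) :
    HasDerivAt (fun s : ℝ => f (x + s • v)) ⟪gradient f (x + t • v), v⟫ t := by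
  have hline : HasDerivAt (fun s : ℝ => x + s • v) v t := by
    simpa using ((hasDerivAt_id t).smul_const v).const_add x
  simpa [Function.comp_def] using
    (hf (x + t • v)).hasGradientAt.hasFDerivAt.comp_hasDerivAt t hline

theorem apply_add_le_of_lipschitzWith_gradient {f : E → ℝ} (hf : Differentiable ℝ f) {L : ℝ≥0}
    (hLip : LipschitzWith L (gradient f)) (x v : E) :
    f (x + v) ≤ f x + ⟪gradient f x, v⟫ + L / 2 * ‖v‖ ^ 2 := by
  -- The claim is `φ 1 ≤ φ 0`; `φ` is antitone on `t ≥ 0` since `∇f` is `L`-Lipschitz.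
  set K : ℝ := L * ‖v‖ ^ 2
  set φ : ℝ → ℝ := fun t => f (x + t • v) - t * ⟪gradient f x, v⟫ - t ^ 2 / 2 * K
  have hφ : ∀ t, HasDerivAt φ (⟪gradient f (x + t • v) - gradient f x, v⟫ - t * K) t := by
    intro t
    have hquad : HasDerivAt (fun s : ℝ => s ^ 2 / 2 * K) (t * K) t := by
      refine (((hasDerivAt_pow 2 t).div_const 2).mul_const K).congr_deriv ?_
      simp only [Nat.cast_ofNat, Nat.add_one_sub_one, pow_one]
      ring
    refine (((hasDerivAt_apply_add_smul hf x v t).sub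
      ((hasDerivAt_id t).mul_const ⟪gradient f x, v⟫)).sub hquad).congr_deriv ?_
    rw [inner_sub_left, one_mul]
  have hinner_le : ∀ t ≥ 0, ⟪gradient f (x + t • v) - gradient f x, v⟫ ≤ t * K := by
    intro t ht
    have hgrad : ‖gradient f (x + t • v) - gradient f x‖ ≤ L * (t * ‖v‖) := by
      simpa [norm_smul, abs_of_nonneg ht] using hLip.norm_sub_le (x + t • v) x
    calc ⟪gradient f (x + t • v) - gradient f x, v⟫
        ≤ ‖gradient f (x + t • v) - gradient f x‖ * ‖v‖ := real_inner_le_norm _ _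
      _ ≤ L * (t * ‖v‖) * ‖v‖ := by gcongr
      _ = t * K := by ring
  have hanti : AntitoneOn φ (Set.Ici 0) :=
    antitoneOn_of_hasDerivWithinAt_nonpos (convex_Ici 0)
      (fun t _ => (hφ t).continuousAt.continuousWithinAt)
      (fun t _ => (hφ t).hasDerivWithinAt)
      (fun t ht => sub_nonpos.2 (hinner_le t (interior_subset ht)))
  have h10 : φ 1 ≤ φ 0 := hanti Set.self_mem_Ici (Set.mem_Ici.2 zero_le_one) zero_le_one
  simp only [φ, K, one_smul, zero_smul, add_zero] at h10
  linarith

theorem neg_inner_gradient_le_of_le_apply_add_smul {f : E → ℝ} (hf : Differentiable ℝ f)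
    {L : ℝ≥0} (hLip : LipschitzWith L (gradient f)) {x d : E} (hd : ‖d‖ ≤ 1) {α c : ℝ}
    (hα : 0 < α) (hstep : f x - c / 2 * α ^ 2 ≤ f (x + α • d)) :
    -⟪gradient f x, d⟫ ≤ 1 / 2 * (L + c) * α := by
  have hdesc := apply_add_le_of_lipschitzWith_gradient hf hLip x (α • d)
  rw [real_inner_smul_right, norm_smul, Real.norm_eq_abs, abs_of_pos hα] at hdesc
  have hquad : (L : ℝ) / 2 * (α * ‖d‖) ^ 2 ≤ L / 2 * α ^ 2 := by
    gcongr
    exact mul_le_of_le_one_right hα.le hd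
  have hslope : -(α * ⟪gradient f x, d⟫) ≤ α * (1 / 2 * (L + c) * α) := by
    linarith
  rw [← mul_neg] at hslope
  exact le_of_mul_le_mul_left hslope hα

end DescentLemma

theorem stmt7_general {n m : ℕ} [NeZero m] (f : Fin m → EuclideanSpace ℝ (Fin n) → ℝ)
    (L : Fin m → NNReal)
    (hf : ∀ i, ContDiff ℝ 1 (f i))
    (hLip : ∀ i, LipschitzWith (L i) (gradient (f i)))
    (D : Finset (EuclideanSpace ℝ (Fin n))) (hD : D.Nonempty)
    (hDnorm : ∀ d ∈ D, ‖d‖ ≤ 1)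
    (x : EuclideanSpace ℝ (Fin n)) (α : ℝ) (hα : 0 < α)
    (c : ℝ)
    (hunsucc : ∀ d ∈ D, ∃ i, f i (x + α • d) ≥ f i x - c / 2 * α ^ 2) :
    - D.inf' hD (fun d =>
        Finset.univ.sup' Finset.univ_nonempty (fun i => ⟪gradient (f i) x, d⟫)) ≤
      1 / 2 * (((Finset.univ.sup' Finset.univ_nonempty L : NNReal) : ℝ) + c) * α := by
  obtain ⟨d, hdD, hdmin⟩ := Finset.exists_mem_eq_inf' hD
    (fun d => Finset.univ.sup' Finset.univ_nonempty (fun i => ⟪gradient (f i) x, d⟫))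
  obtain ⟨i, hi⟩ := hunsucc d hdD
  have hLi : L i ≤ Finset.univ.sup' Finset.univ_nonempty L :=
    Finset.le_sup' L (Finset.mem_univ i)
  rw [hdmin]
  calc -Finset.univ.sup' Finset.univ_nonempty (fun j => ⟪gradient (f j) x, d⟫)
      ≤ -⟪gradient (f i) x, d⟫ :=
        neg_le_neg (Finset.le_sup' (fun j => ⟪gradient (f j) x, d⟫) (Finset.mem_univ i))
    _ ≤ 1 / 2 * (L i + c) * α := neg_inner_gradient_le_of_le_apply_add_smul
        ((hf i).differentiable one_ne_zero) (hLip i) (hDnorm d hdD) hα hi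
    _ ≤ 1 / 2 * ((Finset.univ.sup' Finset.univ_nonempty L : ℝ≥0) + c) * α := by
        gcongr

theorem stmt7 {n m : ℕ} [NeZero m] (f : Fin m → EuclideanSpace ℝ (Fin n) → ℝ)
    (L : Fin m → NNReal)
    (hf : ∀ i, ContDiff ℝ 1 (f i))
    (hLip : ∀ i, LipschitzWith (L i) (gradient (f i)))
    (D : Finset (EuclideanSpace ℝ (Fin n))) (hD : D.Nonempty)
    (hDnorm : ∀ d ∈ D, ‖d‖ ≤ 1)
    (x : EuclideanSpace ℝ (Fin n)) (α : ℝ) (hα : 0 < α)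
    (c : ℝ) (hc : 0 < c)
    (hunsucc : ∀ d ∈ D, ∃ i, f i (x + α • d) ≥ f i x - c / 2 * α ^ 2) :
    - D.inf' hD (fun d =>
        Finset.univ.sup' Finset.univ_nonempty (fun i => ⟪gradient (f i) x, d⟫)) ≤
      1 / 2 * (((Finset.univ.sup' Finset.univ_nonempty L : NNReal) : ℝ) + c) * α :=
  stmt7_general f L hf hLip D hD hDnorm x α hα c hunsucc
end
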